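/- arXiv:2103.10152 — 2 statements merged into one kernel-verified Lean document; each statement's English description precedes it below -/
import Mathlib

section
/- Assume (Poly-R₁). Then for every a>0 there exists a constant c₁=c₁(a)>0 such that |φ″(λ)| ≤ c₁λ^{−1}φ′(λ) for all λ>a. Moreover, if (Poly-∞) holds, then |φ″(λ)| ≤ c₁λ^{−1}φ′(λ) holds for all λ>0. -/
open MeasureTheory Real Set
open scoped ENNReal

/-- Tail of the Lévy measure: `w(r) = ν((r,∞))`. -/
noncomputable def levyTail (ν : Measure ℝ) (r : ℝ) : ℝ := (ν (Set.Ioi r)).toReal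

/-- Laplace exponent `φ(λ) = ∫ (1 - e^{-λ s}) ν(ds)`. -/
noncomputable def laplaceExp (ν : Measure ℝ) (lam : ℝ) : ℝ :=
  ∫ s, (1 - Real.exp (-(lam * s))) ∂ν

/-- Condition (Poly-R₁); (Poly-∞) is the case `R₁ = ⊤`. -/
def PolyCond (ν : Measure ℝ) (R₁ : ℝ≥0∞) (c c' β₁ β₂ : ℝ) : Prop :=
  ∀ r R : ℝ, 0 < r → r ≤ R → ENNReal.ofReal R < R₁ →
    c * (R / r) ^ β₁ ≤ levyTail ν r / levyTail ν R ∧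
      levyTail ν r / levyTail ν R ≤ c' * (R / r) ^ β₂

/-- `ν` is the Lévy measure of a driftless subordinator. -/
structure IsLevyMeasure (ν : Measure ℝ) : Prop where
  supp : ν (Set.Iic 0) = 0
  tail_fin : ∀ r : ℝ, 0 < r → ν (Set.Ioi r) < ⊤
  integ : IntegrableOn (fun s => s) (Set.Ioc (0:ℝ) 1) ν

/-- `μ t` is the law of `S_t` for the driftless subordinator with Lévy measure `ν`. -/
structure IsSubordinatorLaw (ν : Measure ℝ) (μ : ℝ → Measure ℝ) : Prop where
  levy : IsLevyMeasure ν
  prob : ∀ t : ℝ, 0 < t → IsProbabilityMeasure (μ t)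
  nonneg : ∀ t : ℝ, 0 < t → μ t (Set.Iio 0) = 0
  laplace : ∀ t lam : ℝ, 0 < t → 0 ≤ lam →
    (∫ s, Real.exp (-(lam * s)) ∂(μ t)) = Real.exp (-(t * laplaceExp ν lam))

/-- `H(λ) = φ(λ) - λ φ'(λ)`. -/
noncomputable def Hfun (ν : Measure ℝ) (lam : ℝ) : ℝ :=
  laplaceExp ν lam - lam * deriv (laplaceExp ν) lam

/-- `σ(t,s) = (φ')⁻¹(s/t)` if `s/t < φ'(0+)`, and `σ(t,s) = 0` otherwise. -/
def IsSigmaFun (ν : Measure ℝ) (σ : ℝ → ℝ → ℝ) : Prop :=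
  ∀ t s : ℝ, 0 < t → 0 < s →
    ((∃ lam : ℝ, 0 < lam ∧ s / t < deriv (laplaceExp ν) lam) →
      0 < σ t s ∧ deriv (laplaceExp ν) (σ t s) = s / t) ∧
    ((∀ lam : ℝ, 0 < lam → deriv (laplaceExp ν) lam ≤ s / t) → σ t s = 0)

/-- `φInv` is the inverse of the Laplace exponent `φ` on `(0,∞)`. -/
def IsPhiInv (ν : Measure ℝ) (φInv : ℝ → ℝ) : Prop :=
  ∀ u : ℝ, 0 < u → 0 < φInv u ∧ laplaceExp ν (φInv u) = u

/-- `HInv` is the inverse of `H` on `(0,∞)`. -/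
def IsHInv (ν : Measure ℝ) (HInv : ℝ → ℝ) : Prop :=
  ∀ u : ℝ, 0 < u → 0 < HInv u ∧ Hfun ν (HInv u) = u

/-!
Differentiating under the integral, `φ'(λ) = ∫ s e^{-λs} ν(ds)` and
`φ''(λ) = -∫ s² e^{-λs} ν(ds)`. Splitting the latter at a scale `T ≤ λ⁻¹` and using
`s² e^{-λs} ≤ 2 λ⁻²` gives `|φ''(λ)| ≤ T φ'(λ) + 2 λ⁻² w(T)`. The lower half of (Poly-R₁)
provides `κ` with `w(T/κ) ≥ 2 w(T)`, so `ν((T/κ, T]) ≥ w(T)`, and `s e^{-λs} ≥ (T/κ) e⁻¹` on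
that interval; hence `w(T) ≤ κ e T⁻¹ φ'(λ)`, and `|φ''(λ)| ≤ (1 + 2κe/(λT)) λ⁻¹ φ'(λ)`.
For `λ > a` take `T = min(λ⁻¹, ρ)` with `0 < ρ < R₁`, so that `λT ≥ min(1, aρ)`;
under (Poly-∞) take `T = λ⁻¹`.
-/

open Filter
open scoped Nat

lemma pow_mul_exp_neg_mul_le {lam s : ℝ} (hlam : 0 < lam) (hs : 0 ≤ s) (n : ℕ) :
    s ^ n * exp (-(lam * s)) ≤ n ! / lam ^ n := by
  have h := pow_div_factorial_le_exp _ (mul_nonneg hlam.le hs) n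
  rw [div_le_iff₀ (by positivity)] at h
  rw [le_div_iff₀ (by positivity), exp_neg, mul_right_comm, ← mul_pow, mul_comm s,
    ← div_eq_mul_inv, div_le_iff₀ (exp_pos _)]
  linarith

namespace IsLevyMeasure

variable {ν : Measure ℝ}

lemma ae_pos (hν : IsLevyMeasure ν) : ∀ᵐ s ∂ν, 0 < s := by
  filter_upwards [measure_eq_zero_iff_ae_notMem.1 hν.supp] with s hs using not_le.1 hs

lemma integrable_of_le_mul_of_le (hν : IsLevyMeasure ν) {f : ℝ → ℝ}
    (hf : AEStronglyMeasurable f ν) {C₁ C₂ : ℝ} (h₁ : ∀ s ∈ Ioc 0 1, ‖f s‖ ≤ C₁ * s)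
    (h₂ : ∀ s ∈ Ioi 1, ‖f s‖ ≤ C₂) : Integrable f ν := by
  rw [← integrableOn_univ, ← Iic_union_Ioi (a := (0 : ℝ)),
    ← Ioc_union_Ioi_eq_Ioi zero_le_one]
  refine (IntegrableOn.union ?_ (IntegrableOn.union ?_ ?_))
  · rw [IntegrableOn, Measure.restrict_eq_zero.mpr hν.supp]
    exact integrable_zero_measure
  · refine (hν.integ.const_mul C₁).mono hf.restrict ?_
    refine (ae_restrict_iff' measurableSet_Ioc).mpr (ae_of_all _ fun s hs => ?_)
    exact (h₁ s hs).trans (le_abs_self _)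
  · exact Measure.integrableOn_of_bounded (hν.tail_fin 1 one_pos).ne hf
      ((ae_restrict_iff' measurableSet_Ioi).mpr (ae_of_all _ h₂))

lemma integrable_pow_mul_exp_neg (hν : IsLevyMeasure ν) {lam : ℝ} (hlam : 0 < lam) {n : ℕ}
    (hn : n ≠ 0) : Integrable (fun s => s ^ n * exp (-(lam * s))) ν := by
  refine hν.integrable_of_le_mul_of_le (by fun_prop) (C₁ := 1) (C₂ := n ! / lam ^ n)
    (fun s hs => ?_) (fun s hs => ?_)
  · have hs₀ : 0 ≤ s := hs.1.le
    rw [Real.norm_of_nonneg (by positivity)]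
    calc s ^ n * exp (-(lam * s)) ≤ s * 1 := by
          gcongr
          · exact pow_le_of_le_one hs₀ hs.2 hn
          · exact exp_le_one_iff.mpr (by nlinarith [hs.1])
      _ = 1 * s := by ring
  · have hs₀ : 0 ≤ s := zero_le_one.trans (le_of_lt hs)
    rw [Real.norm_of_nonneg (by positivity)]
    exact pow_mul_exp_neg_mul_le hlam hs₀ n

lemma integrable_mul_exp_neg (hν : IsLevyMeasure ν) {lam : ℝ} (hlam : 0 < lam) :
    Integrable (fun s => s * exp (-(lam * s))) ν := by
  simpa using hν.integrable_pow_mul_exp_neg hlam one_ne_zero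

lemma hasDerivAt_integral_of_abs_deriv_le (hν : IsLevyMeasure ν) {F F' : ℝ → ℝ → ℝ} {n : ℕ}
    (hn : n ≠ 0) {lam : ℝ} (hlam : 0 < lam) (hF_meas : ∀ x, AEStronglyMeasurable (F x) ν)
    (hF_int : Integrable (F lam) ν) (hF'_meas : AEStronglyMeasurable (F' lam) ν)
    (hF : ∀ x s, HasDerivAt (F · s) (F' x s) x)
    (hF'_le : ∀ x s, 0 < s → |F' x s| ≤ s ^ n * exp (-(x * s))) :
    HasDerivAt (fun x => ∫ s, F x s ∂ν) (∫ s, F' lam s ∂ν) lam := by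
  refine (hasDerivAt_integral_of_dominated_loc_of_deriv_le (Ioi_mem_nhds (half_lt_self hlam))
    (.of_forall hF_meas) hF_int hF'_meas ?_ (hν.integrable_pow_mul_exp_neg (half_pos hlam) hn)
    (.of_forall fun s x _ => hF x s)).2
  filter_upwards [hν.ae_pos] with s hs x hx
  calc ‖F' x s‖ ≤ s ^ n * exp (-(x * s)) := hF'_le x s hs
    _ ≤ s ^ n * exp (-(lam / 2 * s)) := by gcongr; exact hx.le

lemma hasDerivAt_laplaceExp (hν : IsLevyMeasure ν) {lam : ℝ} (hlam : 0 < lam) :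
    HasDerivAt (laplaceExp ν) (∫ s, s * exp (-(lam * s)) ∂ν) lam := by
  refine hν.hasDerivAt_integral_of_abs_deriv_le (F := fun x s => 1 - exp (-(x * s)))
    (F' := fun x s => s * exp (-(x * s))) one_ne_zero hlam (fun _ => by fun_prop)
    (hν.integrable_of_le_mul_of_le (by fun_prop) (C₁ := lam) (C₂ := 1) ?_ ?_) (by fun_prop)
    (fun x s => ?_) (fun x s hs => ?_)
  · intro s hs
    have h := add_one_le_exp (-(lam * s))
    have h' : exp (-(lam * s)) ≤ 1 := exp_le_one_iff.mpr (by nlinarith [hs.1])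
    rw [Real.norm_of_nonneg (by linarith)]
    linarith
  · intro s hs
    have h : exp (-(lam * s)) ≤ 1 := exp_le_one_iff.mpr (by nlinarith [mem_Ioi.1 hs])
    rw [Real.norm_of_nonneg (by linarith)]
    linarith [exp_pos (-(lam * s))]
  · simpa [mul_comm] using ((hasDerivAt_mul_const (x := x) s).neg.exp.const_sub 1)
  · rw [pow_one, abs_of_nonneg (by positivity)]

lemma hasDerivAt_integral_mul_exp_neg (hν : IsLevyMeasure ν) {lam : ℝ} (hlam : 0 < lam) :
    HasDerivAt (fun x => ∫ s, s * exp (-(x * s)) ∂ν)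
      (-∫ s, s ^ 2 * exp (-(lam * s)) ∂ν) lam := by
  rw [← integral_neg]
  refine hν.hasDerivAt_integral_of_abs_deriv_le (F := fun x s => s * exp (-(x * s)))
    (F' := fun x s => -(s ^ 2 * exp (-(x * s)))) two_ne_zero hlam (fun _ => by fun_prop)
    (hν.integrable_mul_exp_neg hlam) (by fun_prop)
    (fun x s => ?_) (fun x s hs => ?_)
  · exact ((hasDerivAt_mul_const (x := x) s).neg.exp.const_mul s).congr_deriv
      (by simp only [Pi.neg_apply]; ring)
  · rw [abs_neg, abs_of_nonneg (by positivity)]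

lemma deriv_laplaceExp (hν : IsLevyMeasure ν) {lam : ℝ} (hlam : 0 < lam) :
    deriv (laplaceExp ν) lam = ∫ s, s * exp (-(lam * s)) ∂ν :=
  (hν.hasDerivAt_laplaceExp hlam).deriv

lemma deriv_deriv_laplaceExp (hν : IsLevyMeasure ν) {lam : ℝ} (hlam : 0 < lam) :
    deriv (deriv (laplaceExp ν)) lam = -∫ s, s ^ 2 * exp (-(lam * s)) ∂ν := by
  have h : deriv (laplaceExp ν) =ᶠ[nhds lam] fun x => ∫ s, s * exp (-(x * s)) ∂ν := by
    filter_upwards [Ioi_mem_nhds hlam] with x hx using hν.deriv_laplaceExp hx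
  rw [h.deriv_eq, (hν.hasDerivAt_integral_mul_exp_neg hlam).deriv]

lemma integral_sq_mul_exp_neg_le (hν : IsLevyMeasure ν) {lam T : ℝ} (hlam : 0 < lam)
    (hT : 0 < T) :
    ∫ s, s ^ 2 * exp (-(lam * s)) ∂ν ≤
      T * ∫ s, s * exp (-(lam * s)) ∂ν + 2 / lam ^ 2 * levyTail ν T := by
  have h₁ := hν.integrable_mul_exp_neg hlam
  have h_tail : Integrable ((Ioi T).indicator fun _ => 2 / lam ^ 2) ν :=
    (integrable_indicator_iff measurableSet_Ioi).2 (integrableOn_const (hν.tail_fin T hT).ne)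
  calc ∫ s, s ^ 2 * exp (-(lam * s)) ∂ν
      ≤ ∫ s, T * (s * exp (-(lam * s))) + (Ioi T).indicator (fun _ => 2 / lam ^ 2) s ∂ν := by
        refine integral_mono_ae (hν.integrable_pow_mul_exp_neg hlam two_ne_zero)
          ((h₁.const_mul T).add h_tail) ?_
        filter_upwards [hν.ae_pos] with s hs
        by_cases hsT : s ≤ T
        · rw [indicator_of_notMem (show s ∉ Ioi T from not_lt.2 hsT), add_zero, sq, mul_assoc]
          gcongr
        · rw [indicator_of_mem (show s ∈ Ioi T from not_le.1 hsT)]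
          have h := pow_mul_exp_neg_mul_le hlam hs.le 2
          norm_num at h
          have : 0 ≤ T * (s * exp (-(lam * s))) := by positivity
          linarith
    _ = T * ∫ s, s * exp (-(lam * s)) ∂ν + 2 / lam ^ 2 * levyTail ν T := by
        rw [integral_add (h₁.const_mul T) h_tail, integral_const_mul,
          integral_indicator_const _ measurableSet_Ioi, smul_eq_mul, mul_comm (ν.real _)]
        rfl

lemma mul_measureReal_Ioc_le_integral_mul_exp_neg (hν : IsLevyMeasure ν) {lam r T : ℝ}
    (hlam : 0 < lam) (hr : 0 < r) (hlamT : lam * T ≤ 1) :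
    r * exp (-1) * ν.real (Ioc r T) ≤ ∫ s, s * exp (-(lam * s)) ∂ν := by
  have hfin : ν (Ioc r T) ≠ ⊤ :=
    measure_ne_top_of_subset Ioc_subset_Ioi_self (hν.tail_fin r hr).ne
  calc r * exp (-1) * ν.real (Ioc r T)
      = ∫ s, (Ioc r T).indicator (fun _ => r * exp (-1)) s ∂ν := by
        rw [integral_indicator_const _ measurableSet_Ioc, smul_eq_mul, mul_comm]
    _ ≤ ∫ s, s * exp (-(lam * s)) ∂ν := by
        refine integral_mono_ae ((integrable_indicator_iff measurableSet_Ioc).2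
          (integrableOn_const hfin)) (hν.integrable_mul_exp_neg hlam) ?_
        filter_upwards [hν.ae_pos] with s hs
        by_cases hsI : s ∈ Ioc r T
        · rw [indicator_of_mem hsI]
          gcongr
          · exact hsI.1.le
          · nlinarith [hsI.2]
        · rw [indicator_of_notMem hsI]
          positivity

lemma levyTail_le_measureReal_Ioc (hν : IsLevyMeasure ν) {R₁ : ℝ≥0∞} {c c' β₁ β₂ κ T : ℝ}
    (hpoly : PolyCond ν R₁ c c' β₁ β₂) (hκ : 1 ≤ κ) (hκc : 2 ≤ c * κ ^ β₁) (hT : 0 < T)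
    (hTR : ENNReal.ofReal T < R₁) :
    levyTail ν T ≤ ν.real (Ioc (T / κ) T) := by
  have hTκ : 0 < T / κ := by positivity
  rw [← Ioi_sdiff_Ioi, measureReal_sdiff (Ioi_subset_Ioi (div_le_self hT.le hκ))
    measurableSet_Ioi (hν.tail_fin _ hTκ).ne]
  change levyTail ν T ≤ levyTail ν (T / κ) - levyTail ν T
  rcases (show 0 ≤ levyTail ν T from ENNReal.toReal_nonneg).eq_or_lt with h₀ | hpos
  · rw [← h₀]
    exact sub_nonneg.2 ENNReal.toReal_nonneg
  · have h := (hpoly (T / κ) T hTκ (div_le_self hT.le hκ) hTR).1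
    rw [div_div_cancel₀ hT.ne', le_div_iff₀ hpos] at h
    nlinarith

lemma abs_deriv_deriv_laplaceExp_le (hν : IsLevyMeasure ν) {R₁ : ℝ≥0∞} {c c' β₁ β₂ κ : ℝ}
    (hpoly : PolyCond ν R₁ c c' β₁ β₂) (hκ : 1 ≤ κ) (hκc : 2 ≤ c * κ ^ β₁) {lam T δ : ℝ}
    (hlam : 0 < lam) (hT : 0 < T) (hδ : 0 < δ) (hδT : δ ≤ lam * T) (hlamT : lam * T ≤ 1)
    (hTR : ENNReal.ofReal T < R₁) :
    |deriv (deriv (laplaceExp ν)) lam| ≤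
      (1 + 2 * κ * exp 1 / δ) * lam⁻¹ * deriv (laplaceExp ν) lam := by
  rw [hν.deriv_deriv_laplaceExp hlam, hν.deriv_laplaceExp hlam, abs_neg,
    abs_of_nonneg (integral_nonneg_of_ae (by filter_upwards with s using by positivity))]
  set I := ∫ s, s * exp (-(lam * s)) ∂ν
  have hI : 0 ≤ I := integral_nonneg_of_ae (by filter_upwards [hν.ae_pos] with s hs; positivity)
  have h_tail : levyTail ν T ≤ κ * exp 1 / T * I := by
    have h := hν.mul_measureReal_Ioc_le_integral_mul_exp_neg hlam (by positivity : 0 < T / κ)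
      hlamT
    rw [exp_neg] at h
    calc levyTail ν T ≤ ν.real (Ioc (T / κ) T) :=
          hν.levyTail_le_measureReal_Ioc hpoly hκ hκc hT hTR
      _ = κ * exp 1 / T * (T / κ * (exp 1)⁻¹ * ν.real (Ioc (T / κ) T)) := by field_simp
      _ ≤ κ * exp 1 / T * I := by gcongr
  calc ∫ s, s ^ 2 * exp (-(lam * s)) ∂ν ≤ T * I + 2 / lam ^ 2 * levyTail ν T :=
        hν.integral_sq_mul_exp_neg_le hlam hT
    _ ≤ T * I + 2 / lam ^ 2 * (κ * exp 1 / T * I) := by gcongr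
    _ = (lam * T + 2 * κ * exp 1 / (lam * T)) * lam⁻¹ * I := by field_simp
    _ ≤ (1 + 2 * κ * exp 1 / δ) * lam⁻¹ * I := by gcongr

end IsLevyMeasure

lemma exists_two_le_mul_rpow {c β : ℝ} (hc : 0 < c) (hβ : 0 < β) :
    ∃ κ : ℝ, 1 ≤ κ ∧ 2 ≤ c * κ ^ β :=
  ((eventually_ge_atTop 1).and
    (((tendsto_rpow_atTop hβ).const_mul_atTop hc).eventually_ge_atTop 2)).exists

theorem phi_second_deriv_bound_general
    (ν : Measure ℝ) (hν : IsLevyMeasure ν)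
    (R₁ : ℝ≥0∞) (c c' β₁ β₂ : ℝ)
    (hR₁ : 0 < R₁) (hc : 0 < c) (hβ₁ : 0 < β₁)
    (hpoly : PolyCond ν R₁ c c' β₁ β₂) :
    (∀ a : ℝ, 0 < a → ∃ c₁ : ℝ, 0 < c₁ ∧
      ∀ lam : ℝ, a < lam →
        |deriv (deriv (laplaceExp ν)) lam| ≤ c₁ * lam⁻¹ * deriv (laplaceExp ν) lam) ∧
    (R₁ = ⊤ → ∃ c₁ : ℝ, 0 < c₁ ∧
      ∀ lam : ℝ, 0 < lam →
        |deriv (deriv (laplaceExp ν)) lam| ≤ c₁ * lam⁻¹ * deriv (laplaceExp ν) lam) := by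
  obtain ⟨κ, hκ, hκc⟩ := exists_two_le_mul_rpow hc hβ₁
  refine ⟨fun a ha => ?_, fun hR => ⟨1 + 2 * κ * exp 1 / 1, by positivity, fun lam hlam => ?_⟩⟩
  · obtain ⟨ρ, -, hρ, hρR⟩ := ENNReal.lt_iff_exists_real_btwn.1 hR₁
    rw [ENNReal.ofReal_pos] at hρ
    refine ⟨1 + 2 * κ * exp 1 / min 1 (a * ρ), by positivity, fun lam hlam => ?_⟩
    have hlam₀ : 0 < lam := ha.trans hlam
    have hlamT : lam * min lam⁻¹ ρ = min 1 (lam * ρ) := by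
      rw [mul_min_of_nonneg _ _ hlam₀.le, mul_inv_cancel₀ hlam₀.ne']
    refine hν.abs_deriv_deriv_laplaceExp_le hpoly hκ hκc (T := min lam⁻¹ ρ) hlam₀
      (by positivity) (by positivity) ?_ (hlamT ▸ min_le_left _ _)
      ((ENNReal.ofReal_le_ofReal (min_le_right _ _)).trans_lt hρR)
    rw [hlamT]
    gcongr
  · have hlamT : lam * lam⁻¹ = 1 := mul_inv_cancel₀ hlam.ne'
    exact hν.abs_deriv_deriv_laplaceExp_le hpoly hκ hκc hlam (inv_pos.2 hlam) one_pos
      hlamT.ge hlamT.le (by simp [hR])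

/-- Lemma 2.2: under (Poly-R₁), for every `a > 0` there is `c₁ > 0` with
`|φ''(λ)| ≤ c₁ λ⁻¹ φ'(λ)` for `λ > a`; under (Poly-∞) this holds for all `λ > 0`. -/
theorem phi_second_deriv_bound
    (ν : Measure ℝ) (hν : IsLevyMeasure ν)
    (R₁ : ℝ≥0∞) (c c' β₁ β₂ : ℝ)
    (hR₁ : 0 < R₁) (hc : 0 < c) (hc' : 0 < c') (hβ₁ : 0 < β₁) (hβ : β₁ ≤ β₂)
    (hpoly : PolyCond ν R₁ c c' β₁ β₂) :
    (∀ a : ℝ, 0 < a → ∃ c₁ : ℝ, 0 < c₁ ∧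
      ∀ lam : ℝ, a < lam →
        |deriv (deriv (laplaceExp ν)) lam| ≤ c₁ * lam⁻¹ * deriv (laplaceExp ν) lam) ∧
    (R₁ = ⊤ → ∃ c₁ : ℝ, 0 < c₁ ∧
      ∀ lam : ℝ, 0 < lam →
        |deriv (deriv (laplaceExp ν)) lam| ≤ c₁ * lam⁻¹ * deriv (laplaceExp ν) lam) :=
  phi_second_deriv_bound_general ν hν R₁ c c' β₁ β₂ hR₁ hc hβ₁ hpoly
end

section
/- Suppose (Poly-R₁) holds. Then for all κ,N>0 and T>0 there exists a constant C=C(T,κ,N)>0 such that exp(−κ t(H∘σ)(t,s)) ≤ C (s φ^{−1}(1/t))^{N} for all 0<t≤T and all 0<s≤1/φ^{−1}(1/t). Moreover, if (Poly-∞) holds, then for all κ,N>0 there exists C=C(κ,N)>0 such that the same inequality holds for all t>0 and all 0<s≤1/φ^{−1}(1/t). -/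
open MeasureTheory Real Set
open scoped ENNReal

/-!
Under (Poly-R₁) the tail `w` doubles over a fixed ratio `M` below `R₁`, which yields the weak lower
scaling `δ φ(λ) ≤ λ φ'(λ)` for `λ > 1/R₁`, hence `φ(Rμ) ≥ R^δ φ(μ)` for `R ≥ 1`. By concavity,
`H(σ) = φ(σ) - σ φ'(σ) ≥ φ(λ) - λ s/t` for every `λ`; testing `λ = μ/x` with `x = s φ⁻¹(1/t)` and
`μ ≍ φ⁻¹(1/t)` gives `t H(σ(t,s)) ≥ x^{-δ} - K`, and `exp(-κ x^{-δ})` is `O(x^N)` on `(0,1]`.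
When `σ(t,s) = 0`, the bound `φ' ≤ s/t` together with the scaling at `μ` instead bounds `x` from
below. For bounded `t`, `μ` is kept above `1/R₁` by taking `μ = max(φ⁻¹(1/t), b)` with `b > 1/R₁`;
it stays comparable to `φ⁻¹(1/t)` because `φ⁻¹(1/t) ≥ φ⁻¹(1/T)`.
-/

section

variable {ν : Measure ℝ}

theorem IsLevyMeasure.ae_pos_s4 (hν : IsLevyMeasure ν) : ∀ᵐ y ∂ν, 0 < y := by
  rw [ae_iff]
  simpa [Iic] using hν.supp

theorem IsLevyMeasure.integrable_min_one (hν : IsLevyMeasure ν) :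
    Integrable (fun y => min y 1) ν := by
  have hnull : IntegrableOn (fun y : ℝ => min y 1) (Iic 0) ν := by
    rw [IntegrableOn, Measure.restrict_eq_zero.mpr hν.supp]
    exact integrable_zero_measure
  have hsmall : IntegrableOn (fun y : ℝ => min y 1) (Ioc 0 1) ν :=
    hν.integ.congr_fun (fun y hy => (min_eq_left hy.2).symm) measurableSet_Ioc
  have hlarge : IntegrableOn (fun y : ℝ => min y 1) (Ioi 1) ν :=
    (integrableOn_const (hν.tail_fin 1 one_pos).ne).congr_fun
      (fun y hy => (min_eq_right (le_of_lt hy)).symm) measurableSet_Ioi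
  rw [← integrableOn_univ, ← Iic_union_Ioi (a := (0 : ℝ)),
    ← Ioc_union_Ioi_eq_Ioi zero_le_one]
  exact hnull.union (hsmall.union hlarge)

theorem IsLevyMeasure.integrable_of_norm_le (hν : IsLevyMeasure ν) {f : ℝ → ℝ}
    (hf : AEStronglyMeasurable f ν) (C : ℝ) (hbound : ∀ y, 0 < y → ‖f y‖ ≤ C * min y 1) :
    Integrable f ν :=
  (hν.integrable_min_one.const_mul C).mono' hf (hν.ae_pos_s4.mono hbound)

theorem IsLevyMeasure.integrable_one_sub_exp (hν : IsLevyMeasure ν) {lam : ℝ} (hlam : 0 ≤ lam) :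
    Integrable (fun y => 1 - exp (-(lam * y))) ν := by
  refine hν.integrable_of_norm_le (by fun_prop) (max lam 1) fun y hy => ?_
  have hexp_le : exp (-(lam * y)) ≤ 1 := exp_le_one_iff.mpr (by nlinarith)
  have hlin : 1 - exp (-(lam * y)) ≤ lam * y := by linarith [add_one_le_exp (-(lam * y))]
  rw [Real.norm_of_nonneg (by linarith)]
  rcases le_total y 1 with h | h
  · rw [min_eq_left h]; nlinarith [le_max_left lam 1]
  · rw [min_eq_right h]; linarith [le_max_right lam 1, exp_pos (-(lam * y))]

theorem IsLevyMeasure.integrable_mul_exp_neg_s4 (hν : IsLevyMeasure ν) {lam : ℝ} (hlam : 0 < lam) :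
    Integrable (fun y => y * exp (-(lam * y))) ν := by
  refine hν.integrable_of_norm_le (by fun_prop) (max 1 lam⁻¹) fun y hy => ?_
  have hexp_le : exp (-(lam * y)) ≤ 1 := exp_le_one_iff.mpr (by nlinarith)
  rw [Real.norm_of_nonneg (by positivity)]
  rcases le_total y 1 with h | h
  · rw [min_eq_left h]; nlinarith [le_max_left 1 lam⁻¹]
  · have hle : lam * y * exp (-(lam * y)) ≤ 1 := by
      rw [← le_div_iff₀ (exp_pos _), exp_neg, div_inv_eq_mul, one_mul]
      linarith [add_one_le_exp (lam * y)]
    rw [min_eq_right h, mul_one]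
    calc y * exp (-(lam * y)) = lam⁻¹ * (lam * y * exp (-(lam * y))) := by field_simp
      _ ≤ lam⁻¹ * 1 := by gcongr
      _ ≤ max 1 lam⁻¹ := by simp

theorem IsLevyMeasure.hasDerivAt_laplaceExp_s4 (hν : IsLevyMeasure ν) {lam : ℝ} (hlam : 0 < lam) :
    HasDerivAt (laplaceExp ν) (∫ y, y * exp (-(lam * y)) ∂ν) lam := by
  have hball : Metric.ball lam (lam / 2) ∈ nhds lam := Metric.ball_mem_nhds lam (by positivity)
  refine (hasDerivAt_integral_of_dominated_loc_of_deriv_le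
    (F := fun x y => 1 - exp (-(x * y))) (F' := fun x y => y * exp (-(x * y)))
    (bound := fun y => y * exp (-(lam / 2 * y))) hball
    (.of_forall fun _ => by fun_prop) (hν.integrable_one_sub_exp hlam.le) (by fun_prop)
    ?_ (hν.integrable_mul_exp_neg_s4 (by positivity)) (.of_forall fun y x _ => ?_)).2
  · filter_upwards [hν.ae_pos_s4] with y hy x hx
    have hx' : lam / 2 < x := by
      have := abs_lt.mp (Metric.mem_ball.mp hx); linarith [this.1]
    rw [Real.norm_of_nonneg (by positivity)]
    gcongr
  · have := (((hasDerivAt_id x).mul_const y).neg.exp).const_sub 1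
    convert this using 1
    · ext; simp
    · simp [mul_comm]

theorem Hfun_zero : Hfun ν 0 = 0 := by
  simp [Hfun, laplaceExp]

theorem IsLevyMeasure.deriv_laplaceExp_s4 (hν : IsLevyMeasure ν) {lam : ℝ} (hlam : 0 < lam) :
    deriv (laplaceExp ν) lam = ∫ y, y * exp (-(lam * y)) ∂ν :=
  (hν.hasDerivAt_laplaceExp_s4 hlam).deriv

theorem IsLevyMeasure.laplaceExp_monotoneOn (hν : IsLevyMeasure ν) :
    MonotoneOn (laplaceExp ν) (Ici 0) := fun u hu v _ huv =>
  integral_mono_ae (hν.integrable_one_sub_exp hu) (hν.integrable_one_sub_exp (hu.trans huv))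
    (hν.ae_pos_s4.mono fun y hy => by
      have : exp (-(v * y)) ≤ exp (-(u * y)) := exp_le_exp.mpr (by nlinarith)
      linarith)

/-- `φ` is concave, so it lies below its tangent line at `σ`. -/
theorem IsLevyMeasure.laplaceExp_sub_mul_deriv_le_Hfun (hν : IsLevyMeasure ν) {σ lam : ℝ}
    (hσ : 0 < σ) (hlam : 0 ≤ lam) :
    laplaceExp ν lam - lam * deriv (laplaceExp ν) σ ≤ Hfun ν σ := by
  have hφσ := hν.integrable_one_sub_exp hσ.le
  have hφ'σ := hν.integrable_mul_exp_neg_s4 hσ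
  have htangent : laplaceExp ν lam ≤
      ∫ y, (1 - exp (-(σ * y))) + (lam - σ) * (y * exp (-(σ * y))) ∂ν := by
    refine integral_mono_ae (hν.integrable_one_sub_exp hlam) (hφσ.add (hφ'σ.const_mul _))
      (hν.ae_pos_s4.mono fun y _ => ?_)
    have hsplit : exp (-(lam * y)) = exp (-(σ * y)) * exp (-((lam - σ) * y)) := by
      rw [← exp_add]; ring_nf
    have := add_one_le_exp (-((lam - σ) * y))
    have := exp_pos (-(σ * y))
    dsimp only
    nlinarith
  rw [integral_add hφσ (hφ'σ.const_mul _), integral_const_mul, ← hν.deriv_laplaceExp_s4 hσ,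
    ← laplaceExp] at htangent
  rw [Hfun]
  linarith

theorem IsLevyMeasure.integrable_indicator_one (hν : IsLevyMeasure ν) {a : ℝ} (ha : 0 < a)
    {s : Set ℝ} (hs : MeasurableSet s) (hsub : s ⊆ Ioi a) :
    Integrable (s.indicator fun _ => (1 : ℝ)) ν :=
  (integrableOn_const ((measure_mono hsub).trans_lt (hν.tail_fin a ha)).ne).integrable_indicator hs

theorem le_exp_one_mul_mul_exp_neg {u : ℝ} (hu : 0 ≤ u) (hu1 : u ≤ 1) :
    u ≤ exp 1 * (u * exp (-u)) := by
  have : 1 ≤ exp 1 * exp (-u) := by rw [← exp_add]; exact one_le_exp (by linarith)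
  nlinarith

/-- The doubling bounds the mass of `ν` on `(1/λ, ∞)` by that on `(1/(Mλ), 1/λ]`, where
`λ y e^{-λ y} ≥ 1/(e M)`. -/
theorem IsLevyMeasure.laplaceExp_le_mul_deriv_of_levyTail_doubling (hν : IsLevyMeasure ν)
    {lam M : ℝ} (hlam : 0 < lam) (hM : 1 ≤ M)
    (hdouble : 2 * levyTail ν lam⁻¹ ≤ levyTail ν (lam⁻¹ / M)) :
    laplaceExp ν lam ≤ exp 1 * (1 + M) * (lam * deriv (laplaceExp ν) lam) := by
  set a := lam⁻¹ with ha_def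
  have ha : 0 < a := inv_pos.mpr hlam
  have ha' : 0 < a / M := by positivity
  have hle_one : ∀ y ≤ a, lam * y ≤ 1 := fun y hy => by
    simpa [ha_def, mul_inv_cancel₀ hlam.ne'] using mul_le_mul_of_nonneg_left hy hlam.le
  have hI := hν.integrable_mul_exp_neg_s4 hlam
  rw [hν.deriv_laplaceExp_s4 hlam]
  set I := ∫ y, y * exp (-(lam * y)) ∂ν
  have hsmall : laplaceExp ν lam ≤ exp 1 * (lam * I) + levyTail ν a := by
    have hind := hν.integrable_indicator_one ha measurableSet_Ioi subset_rfl
    have hmono : laplaceExp ν lam ≤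
        ∫ y, exp 1 * (lam * (y * exp (-(lam * y)))) + (Ioi a).indicator (fun _ => 1) y ∂ν := by
      refine integral_mono_ae (hν.integrable_one_sub_exp hlam.le)
        (((hI.const_mul lam).const_mul _).add hind) (hν.ae_pos_s4.mono fun y hy => ?_)
      by_cases hya : y ≤ a
      · have := le_exp_one_mul_mul_exp_neg (by positivity) (hle_one y hya)
        dsimp only
        rw [indicator_of_notMem (notMem_Ioi.mpr hya), add_zero, ← mul_assoc lam]
        linarith [add_one_le_exp (-(lam * y))]
      · dsimp only
        rw [indicator_of_mem (mem_Ioi.mpr (lt_of_not_ge hya))]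
        have : 0 ≤ exp 1 * (lam * (y * exp (-(lam * y)))) := by positivity
        linarith [exp_pos (-(lam * y))]
    rwa [integral_add ((hI.const_mul lam).const_mul _) hind, integral_const_mul, integral_const_mul,
      integral_indicator_const _ measurableSet_Ioi, smul_eq_mul, mul_one] at hmono
  have hmiddle : ν.real (Ioc (a / M) a) ≤ exp 1 * M * (lam * I) := by
    have hind := hν.integrable_indicator_one ha' measurableSet_Ioc
      (Ioc_subset_Ioi_self : Ioc (a / M) a ⊆ _)
    have hmono : ∫ y, (Ioc (a / M) a).indicator (fun _ => (1 : ℝ)) y ∂ν ≤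
        ∫ y, exp 1 * M * lam * (y * exp (-(lam * y))) ∂ν := by
      refine integral_mono_ae hind (hI.const_mul _) (hν.ae_pos_s4.mono fun y hy => ?_)
      by_cases hy' : y ∈ Ioc (a / M) a
      · have hlow : 1 ≤ M * (lam * y) := by
          have := mul_lt_mul_of_pos_left hy'.1 (mul_pos (by linarith : (0 : ℝ) < M) hlam)
          rw [ha_def, mul_div_assoc', mul_assoc, mul_inv_cancel₀ hlam.ne', mul_one,
            div_self (by linarith : M ≠ 0)] at this
          linarith
        have := le_exp_one_mul_mul_exp_neg (by positivity) (hle_one y hy'.2)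
        rw [indicator_of_mem hy']
        nlinarith
      · rw [indicator_of_notMem hy']; positivity
    rw [integral_indicator_const _ measurableSet_Ioc, smul_eq_mul, mul_one, integral_const_mul]
      at hmono
    linarith
  have htail : levyTail ν a ≤ ν.real (Ioc (a / M) a) := by
    have hsub : Ioi a ⊆ Ioi (a / M) := Ioi_subset_Ioi (div_le_self ha.le hM)
    rw [← Ioi_sdiff_Ioi, measureReal_sdiff hsub measurableSet_Ioi (hν.tail_fin _ ha').ne]
    simp only [levyTail, measureReal_def] at hdouble ⊢
    linarith
  nlinarith [exp_pos 1]

theorem levyTail_nonneg (r : ℝ) : 0 ≤ levyTail ν r := ENNReal.toReal_nonneg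

theorem PolyCond.exists_levyTail_doubling {R₁ : ℝ≥0∞} {c c' β₁ β₂ : ℝ}
    (hpoly : PolyCond ν R₁ c c' β₁ β₂) (hc : 0 < c) (hβ₁ : 0 < β₁) :
    ∃ M, 1 ≤ M ∧ ∀ r, 0 < r → ENNReal.ofReal r < R₁ → 2 * levyTail ν r ≤ levyTail ν (r / M) := by
  set M := max 1 ((2 / c) ^ β₁⁻¹)
  have hM : 1 ≤ M := le_max_left _ _
  have hcM : 2 ≤ c * M ^ β₁ := by
    have : (2 / c) ^ β₁⁻¹ ≤ M := le_max_right _ _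
    have := rpow_le_rpow (by positivity) this hβ₁.le
    rw [← rpow_mul (by positivity), inv_mul_cancel₀ hβ₁.ne', rpow_one, div_le_iff₀' hc] at this
    exact this
  refine ⟨M, hM, fun r hr hrR => ?_⟩
  have hratio := (hpoly (r / M) r (by positivity) (div_le_self hr.le hM) hrR).1
  rw [div_div_cancel₀ hr.ne'] at hratio
  rcases (levyTail_nonneg r).eq_or_lt with hzero | hpos
  · rw [← hzero, mul_zero]; exact levyTail_nonneg _
  · rw [le_div_iff₀ hpos] at hratio
    nlinarith

theorem IsLevyMeasure.exists_laplaceExp_le_mul_deriv {R₁ : ℝ≥0∞} {c c' β₁ β₂ : ℝ}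
    (hν : IsLevyMeasure ν) (hpoly : PolyCond ν R₁ c c' β₁ β₂) (hc : 0 < c) (hβ₁ : 0 < β₁) :
    ∃ δ > 0, ∀ lam, 0 < lam → ENNReal.ofReal lam⁻¹ < R₁ →
      δ * laplaceExp ν lam ≤ lam * deriv (laplaceExp ν) lam := by
  obtain ⟨M, hM, hdouble⟩ := hpoly.exists_levyTail_doubling hc hβ₁
  have hpos : 0 < exp 1 * (1 + M) := by positivity
  refine ⟨(exp 1 * (1 + M))⁻¹, inv_pos.mpr hpos, fun lam hlam hR => ?_⟩
  rw [inv_mul_le_iff₀ hpos]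
  exact hν.laplaceExp_le_mul_deriv_of_levyTail_doubling hlam hM
    (hdouble _ (inv_pos.mpr hlam) hR)

/-- `l ↦ φ(l) l^{-δ}` is nondecreasing on `[μ, ∞)`. -/
theorem IsLevyMeasure.rpow_mul_laplaceExp_le (hν : IsLevyMeasure ν) {δ μ R : ℝ} (hμ : 0 < μ)
    (hscale : ∀ lam, μ ≤ lam → δ * laplaceExp ν lam ≤ lam * deriv (laplaceExp ν) lam)
    (hR : 1 ≤ R) :
    R ^ δ * laplaceExp ν μ ≤ laplaceExp ν (R * μ) := by
  set f : ℝ → ℝ := fun l => laplaceExp ν l * l ^ (-δ)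
  have hderiv : ∀ l, 0 < l → HasDerivAt f
      (deriv (laplaceExp ν) l * l ^ (-δ) + laplaceExp ν l * (-δ * l ^ (-δ - 1))) l :=
    fun l hl => (hν.hasDerivAt_laplaceExp_s4 hl).deriv ▸
      (hν.hasDerivAt_laplaceExp_s4 hl).mul (hasDerivAt_rpow_const (Or.inl hl.ne'))
  have hmono : MonotoneOn f (Ici μ) := by
    refine monotoneOn_of_hasDerivWithinAt_nonneg (convex_Ici μ)
      (fun l hl => (hderiv l (hμ.trans_le hl)).continuousAt.continuousWithinAt)
      (fun l hl => (hderiv l (hμ.trans (interior_Ici.subset hl))).hasDerivWithinAt)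
      (fun l hl => ?_)
    rw [interior_Ici] at hl
    have hl0 : 0 < l := hμ.trans hl
    have hsplit : l ^ (-δ) = l * l ^ (-δ - 1) := by
      rw [rpow_sub_one hl0.ne']
      field_simp
    have hfactor : deriv (laplaceExp ν) l * l ^ (-δ) + laplaceExp ν l * (-δ * l ^ (-δ - 1)) =
        (l * deriv (laplaceExp ν) l - δ * laplaceExp ν l) * l ^ (-δ - 1) := by
      rw [hsplit]; ring
    rw [hfactor]
    exact mul_nonneg (sub_nonneg.mpr (hscale l hl.le)) (by positivity)
  have hRμ : 0 < R * μ := by positivity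
  have := hmono self_mem_Ici (show μ ≤ R * μ by nlinarith) (by nlinarith)
  simp only [f] at this
  calc R ^ δ * laplaceExp ν μ = laplaceExp ν μ * μ ^ (-δ) * (R * μ) ^ δ := by
        rw [mul_rpow (by linarith) hμ.le, rpow_neg hμ.le]
        field_simp
    _ ≤ laplaceExp ν (R * μ) * (R * μ) ^ (-δ) * (R * μ) ^ δ := by gcongr
    _ = laplaceExp ν (R * μ) := by
        rw [rpow_neg hRμ.le]
        field_simp

/-- Via `z = x^{-β} ≥ 1`: `z^{N/β} ≤ z^n ≤ n! e^{az} / a^n` with `n = ⌈N/β⌉`. -/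
theorem exists_exp_neg_mul_rpow_neg_le {a β N : ℝ} (ha : 0 < a) (hβ : 0 < β) :
    ∃ C > 0, ∀ x : ℝ, 0 < x → x ≤ 1 → exp (-(a * x ^ (-β))) ≤ C * x ^ N := by
  set n := ⌈N / β⌉₊
  refine ⟨n.factorial / a ^ n, by positivity, fun x hx hx1 => ?_⟩
  set z := x ^ (-β)
  have hz1 : 1 ≤ z := one_le_rpow_of_pos_of_le_one_of_nonpos hx hx1 (by linarith)
  have hxN : x ^ N = (z ^ (N / β))⁻¹ := by
    rw [← rpow_mul hx.le, ← rpow_neg hx.le]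
    field_simp
  have hzn : z ^ (N / β) ≤ z ^ n := by
    rw [← rpow_natCast]; exact rpow_le_rpow_of_exponent_le hz1 (Nat.le_ceil _)
  have hfact : (a * z) ^ n / n.factorial ≤ exp (a * z) :=
    pow_div_factorial_le_exp _ (by positivity) n
  have hzq : 0 < z ^ (N / β) := by positivity
  rw [hxN, exp_neg, ← div_eq_mul_inv, le_div_iff₀ hzq, inv_mul_le_iff₀ (exp_pos _)]
  rw [mul_pow, div_le_iff₀ (by positivity)] at hfact
  calc z ^ (N / β) ≤ z ^ n := hzn
    _ ≤ exp (a * z) * (n.factorial / a ^ n) := by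
      rw [mul_div_assoc', le_div_iff₀ (by positivity)]; linarith

theorem IsPhiInv.le_of_le {φInv : ℝ → ℝ} (hφInv : IsPhiInv ν φInv) (hν : IsLevyMeasure ν)
    {t T : ℝ} (ht : 0 < t) (htT : t ≤ T) : φInv T⁻¹ ≤ φInv t⁻¹ := by
  obtain ⟨hLt, hφLt⟩ := hφInv t⁻¹ (inv_pos.mpr ht)
  obtain ⟨hLT, hφLT⟩ := hφInv T⁻¹ (inv_pos.mpr (ht.trans_le htT))
  by_contra! hlt
  have := hν.laplaceExp_monotoneOn hLt.le hLT.le hlt.le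
  rw [hφLt, hφLT, inv_le_inv₀ ht (ht.trans_le htT)] at this
  rw [le_antisymm htT this] at hlt
  exact lt_irrefl _ hlt

section CriticalPoint

variable {δ μ B L t s : ℝ}

/-- Testing the tangent-line bound for `H(σ)` at `λ = μ / x`, `x = s L`, and scaling `φ` from `μ`
up to `μ / x`. -/
theorem IsLevyMeasure.rpow_neg_sub_le_mul_Hfun_of_deriv_eq (hν : IsLevyMeasure ν) (hL : 0 < L)
    (hφL : laplaceExp ν L = t⁻¹) (ht : 0 < t) (hs : 0 < s) (hsL : s * L ≤ 1) (hLμ : L ≤ μ)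
    (hμB : μ ≤ B * L)
    (hscale : ∀ lam, μ ≤ lam → δ * laplaceExp ν lam ≤ lam * deriv (laplaceExp ν) lam)
    {σ : ℝ} (hσ : 0 < σ) (hσs : deriv (laplaceExp ν) σ = s / t) :
    (s * L) ^ (-δ) - B ≤ t * Hfun ν σ := by
  set x := s * L
  have hx : 0 < x := by positivity
  have hμ : 0 < μ := hL.trans_le hLμ
  have htangent := hν.laplaceExp_sub_mul_deriv_le_Hfun hσ (div_pos hμ hx).le (lam := μ / x)
  have hscaled := hν.rpow_mul_laplaceExp_le hμ hscale (one_le_inv₀ hx |>.mpr hsL)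
  have hφμ : t⁻¹ ≤ laplaceExp ν μ := hφL ▸ hν.laplaceExp_monotoneOn hL.le hμ.le hLμ
  have hlow : x ^ (-δ) ≤ t * laplaceExp ν (μ / x) := by
    calc x ^ (-δ) = t * (x⁻¹ ^ δ * t⁻¹) := by
          rw [inv_rpow hx.le, rpow_neg hx.le]; field_simp
      _ ≤ t * laplaceExp ν (μ / x) := by
          rw [← inv_mul_eq_div]
          gcongr
          exact (mul_le_mul_of_nonneg_left hφμ (by positivity)).trans hscaled
  have hcost : s * (μ / x) ≤ B := by
    rw [show s * (μ / x) = μ / L by simp only [x]; field_simp, div_le_iff₀ hL]; exact hμB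
  rw [hσs] at htangent
  have : t * (laplaceExp ν (μ / x) - μ / x * (s / t)) = t * laplaceExp ν (μ / x) - s * (μ / x) := by
    field_simp
  nlinarith

theorem IsLevyMeasure.le_mul_of_deriv_laplaceExp_le (hν : IsLevyMeasure ν) (hδ : 0 ≤ δ) (hL : 0 < L)
    (hφL : laplaceExp ν L = t⁻¹) (ht : 0 < t) (hLμ : L ≤ μ) (hμB : μ ≤ B * L)
    (hscale : ∀ lam, μ ≤ lam → δ * laplaceExp ν lam ≤ lam * deriv (laplaceExp ν) lam)
    (hderiv : ∀ lam, 0 < lam → deriv (laplaceExp ν) lam ≤ s / t) (hs : 0 < s) :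
    δ ≤ B * (s * L) := by
  have hμ : 0 < μ := hL.trans_le hLμ
  have hφμ : t⁻¹ ≤ laplaceExp ν μ := hφL ▸ hν.laplaceExp_monotoneOn hL.le hμ.le hLμ
  have hbound : δ * t⁻¹ ≤ μ * s * t⁻¹ := by
    calc δ * t⁻¹ ≤ δ * laplaceExp ν μ := by gcongr
      _ ≤ μ * deriv (laplaceExp ν) μ := hscale μ le_rfl
      _ ≤ μ * (s / t) := by gcongr; exact hderiv μ hμ
      _ = μ * s * t⁻¹ := by ring
  have := le_of_mul_le_mul_right hbound (inv_pos.mpr ht)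
  nlinarith

end CriticalPoint

theorem IsSigmaFun.rpow_neg_sub_le_mul_Hfun {σ : ℝ → ℝ → ℝ} (hσ : IsSigmaFun ν σ)
    (hν : IsLevyMeasure ν) {δ μ B L t s : ℝ} (hδ : 0 < δ) (hL : 0 < L)
    (hφL : laplaceExp ν L = t⁻¹) (ht : 0 < t) (hs : 0 < s) (hsL : s * L ≤ 1) (hLμ : L ≤ μ)
    (hμB : μ ≤ B * L)
    (hscale : ∀ lam, μ ≤ lam → δ * laplaceExp ν lam ≤ lam * deriv (laplaceExp ν) lam) :
    (s * L) ^ (-δ) - (B + (B / δ) ^ δ) ≤ t * Hfun ν (σ t s) := by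
  have hB : 0 < B := pos_of_mul_pos_left ((hL.trans_le hLμ).trans_le hμB) hL.le
  by_cases hcrit : ∃ lam, 0 < lam ∧ s / t < deriv (laplaceExp ν) lam
  · obtain ⟨hσpos, hσs⟩ := (hσ t s ht hs).1 hcrit
    have := hν.rpow_neg_sub_le_mul_Hfun_of_deriv_eq hL hφL ht hs hsL hLμ hμB hscale hσpos hσs
    linarith [rpow_nonneg (div_pos hB hδ).le δ]
  · push Not at hcrit
    rw [(hσ t s ht hs).2 hcrit, Hfun_zero, mul_zero, sub_nonpos]
    have hx := hν.le_mul_of_deriv_laplaceExp_le hδ.le hL hφL ht hLμ hμB hscale hcrit hs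
    calc (s * L) ^ (-δ) ≤ (δ / B) ^ (-δ) := by
          apply rpow_le_rpow_of_nonpos (by positivity) (by rwa [div_le_iff₀' hB]) (by linarith)
      _ = (B / δ) ^ δ := by rw [rpow_neg (by positivity), ← inv_rpow (by positivity), inv_div]
      _ ≤ B + (B / δ) ^ δ := by linarith

theorem IsSigmaFun.exists_exp_neg_mul_Hfun_le {σ : ℝ → ℝ → ℝ} (hσ : IsSigmaFun ν σ)
    (hν : IsLevyMeasure ν) {φInv : ℝ → ℝ} (hφInv : IsPhiInv ν φInv) {δ b B : ℝ} (hδ : 0 < δ)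
    (hB : 1 ≤ B)
    (hscale : ∀ lam, 0 < lam → b ≤ lam → δ * laplaceExp ν lam ≤ lam * deriv (laplaceExp ν) lam)
    {κ : ℝ} (hκ : 0 < κ) (N : ℝ) :
    ∃ C > 0, ∀ t s, 0 < t → 0 < s → s ≤ (φInv t⁻¹)⁻¹ → b ≤ B * φInv t⁻¹ →
      exp (-(κ * (t * Hfun ν (σ t s)))) ≤ C * (s * φInv t⁻¹) ^ N := by
  obtain ⟨C, hC, hexp⟩ := exists_exp_neg_mul_rpow_neg_le (N := N) hκ hδ
  set K := B + (B / δ) ^ δ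
  refine ⟨exp (κ * K) * C, by positivity, fun t s ht hs hsL hbB => ?_⟩
  obtain ⟨hL, hφL⟩ := hφInv t⁻¹ (inv_pos.mpr ht)
  set L := φInv t⁻¹
  have hsL' : s * L ≤ 1 := by rwa [← le_inv_mul_iff₀' hL, mul_one]
  have hlow := hσ.rpow_neg_sub_le_mul_Hfun hν hδ hL hφL ht hs hsL' (le_max_left L b)
    (max_le (by nlinarith) hbB)
    (fun lam hlam => hscale lam (hL.trans_le ((le_max_left _ _).trans hlam))
      ((le_max_right _ _).trans hlam))
  calc exp (-(κ * (t * Hfun ν (σ t s))))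
      ≤ exp (κ * K) * exp (-(κ * (s * L) ^ (-δ))) := by
        rw [← exp_add]; gcongr; nlinarith
    _ ≤ exp (κ * K) * (C * (s * L) ^ N) := by gcongr; exact hexp _ (by positivity) hsL'
    _ = exp (κ * K) * C * (s * L) ^ N := by ring

end

theorem left_tail_power_bound_general
    (ν : Measure ℝ) (hν : IsLevyMeasure ν)
    (σ : ℝ → ℝ → ℝ) (hσ : IsSigmaFun ν σ)
    (φInv : ℝ → ℝ) (hφInv : IsPhiInv ν φInv)
    (R₁ : ℝ≥0∞) (c c' β₁ β₂ : ℝ)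
    (hR₁ : 0 < R₁) (hc : 0 < c) (hβ₁ : 0 < β₁)
    (hpoly : PolyCond ν R₁ c c' β₁ β₂) :
    (∀ κ N T : ℝ, 0 < κ → 0 < N → 0 < T → ∃ C : ℝ, 0 < C ∧
      ∀ t s : ℝ, 0 < t → t ≤ T → 0 < s → s ≤ (φInv (t⁻¹))⁻¹ →
        Real.exp (-(κ * (t * Hfun ν (σ t s)))) ≤ C * (s * φInv (t⁻¹)) ^ N) ∧
    (R₁ = ⊤ → ∀ κ N : ℝ, 0 < κ → 0 < N → ∃ C : ℝ, 0 < C ∧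
      ∀ t s : ℝ, 0 < t → 0 < s → s ≤ (φInv (t⁻¹))⁻¹ →
        Real.exp (-(κ * (t * Hfun ν (σ t s)))) ≤ C * (s * φInv (t⁻¹)) ^ N) := by
  obtain ⟨δ, hδ, hscale⟩ := hν.exists_laplaceExp_le_mul_deriv hpoly hc hβ₁
  refine ⟨fun κ N T hκ _ hT => ?_, fun htop κ N hκ _ => ?_⟩
  · obtain ⟨r, -, hr0, hrR⟩ := ENNReal.lt_iff_exists_real_btwn.mp hR₁
    have hr : 0 < r := ENNReal.ofReal_pos.mp hr0
    obtain ⟨hLT, -⟩ := hφInv T⁻¹ (inv_pos.mpr hT)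
    obtain ⟨C, hC, hbound⟩ := hσ.exists_exp_neg_mul_Hfun_le hν hφInv hδ
      (le_max_left 1 (r⁻¹ / φInv T⁻¹)) (b := r⁻¹)
      (fun lam hlam hrlam => hscale lam hlam
        ((ENNReal.ofReal_le_ofReal (inv_le_of_inv_le₀ hr hrlam)).trans_lt hrR)) hκ N
    refine ⟨C, hC, fun t s ht htT hs hsL => hbound t s ht hs hsL ?_⟩
    calc r⁻¹ = r⁻¹ / φInv T⁻¹ * φInv T⁻¹ := (div_mul_cancel₀ _ hLT.ne').symm
      _ ≤ max 1 (r⁻¹ / φInv T⁻¹) * φInv t⁻¹ :=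
        mul_le_mul (le_max_right _ _) (hφInv.le_of_le hν ht htT) hLT.le (by positivity)
  · obtain ⟨C, hC, hbound⟩ := hσ.exists_exp_neg_mul_Hfun_le hν hφInv hδ le_rfl (b := 0)
      (fun lam hlam _ => hscale lam hlam (htop ▸ ENNReal.ofReal_lt_top)) hκ N
    exact ⟨C, hC, fun t s ht hs hsL =>
      hbound t s ht hs hsL (by simpa using (hφInv _ (inv_pos.mpr ht)).1.le)⟩

/-- Lemma 2.5: under (Poly-R₁), for all `κ, N, T > 0` there is `C > 0` with
`exp(-κ t H(σ(t,s))) ≤ C (s φ⁻¹(1/t))^N` for `0 < t ≤ T` and `0 < s ≤ 1/φ⁻¹(1/t)`;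
under (Poly-∞) the constant can be chosen uniformly in `t > 0`. -/
theorem left_tail_power_bound
    (ν : Measure ℝ) (hν : IsLevyMeasure ν)
    (σ : ℝ → ℝ → ℝ) (hσ : IsSigmaFun ν σ)
    (φInv : ℝ → ℝ) (hφInv : IsPhiInv ν φInv)
    (R₁ : ℝ≥0∞) (c c' β₁ β₂ : ℝ)
    (hR₁ : 0 < R₁) (hc : 0 < c) (hc' : 0 < c') (hβ₁ : 0 < β₁) (hβ : β₁ ≤ β₂)
    (hpoly : PolyCond ν R₁ c c' β₁ β₂) :
    (∀ κ N T : ℝ, 0 < κ → 0 < N → 0 < T → ∃ C : ℝ, 0 < C ∧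
      ∀ t s : ℝ, 0 < t → t ≤ T → 0 < s → s ≤ (φInv (t⁻¹))⁻¹ →
        Real.exp (-(κ * (t * Hfun ν (σ t s)))) ≤ C * (s * φInv (t⁻¹)) ^ N) ∧
    (R₁ = ⊤ → ∀ κ N : ℝ, 0 < κ → 0 < N → ∃ C : ℝ, 0 < C ∧
      ∀ t s : ℝ, 0 < t → 0 < s → s ≤ (φInv (t⁻¹))⁻¹ →
        Real.exp (-(κ * (t * Hfun ν (σ t s)))) ≤ C * (s * φInv (t⁻¹)) ^ N) :=
  left_tail_power_bound_general ν hν σ hσ φInv hφInv R₁ c c' β₁ β₂ hR₁ hc hβ₁ hpoly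
end
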